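/- Let n ≥ 1, 0 < m < M, δ = (M − m)/n, and for 1 ≤ i ≤ n let σ_i be the price sequence of length n given by σ_i(k) = m + (k+1)δ for 0 ≤ k ≤ i−1 and σ_i(k) = m for i ≤ k ≤ n−1. Then max_k σ_i(k) = m + iδ, and for any deterministic online search strategy A and any 1 ≤ i < j ≤ n, it is not the case that both profit(A, σ_i) = m + iδ and profit(A, σ_j) = m + jδ; that is, no single deterministic strategy is optimal on two distinct instances σ_i, σ_j. -/
import Mathlib


/-- The maximum price of a price sequence of positive length. -/
noncomputable def maxPrice {n : ℕ} (hn : 0 < n) (σ : Fin n → ℝ) : ℝ :=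
  Finset.univ.sup' ⟨⟨0, hn⟩, Finset.mem_univ _⟩ σ

/-- The profit of a deterministic online search strategy `A : List ℝ → Bool`
on the price sequence `σ`: it accepts at the least index `k` such that `A`
applied to the prefix `[σ 0, …, σ k]` is `true`, obtaining `σ k`; if no such
index exists it must accept the last price `σ (n-1)`. -/
noncomputable def osProfit {n : ℕ} (hn : 0 < n) (A : List ℝ → Bool) (σ : Fin n → ℝ) : ℝ :=
  if h : ∃ k : Fin n, A ((List.ofFn σ).take ((k : ℕ) + 1)) = true then
    σ ((Finset.univ.filter (fun k : Fin n => A ((List.ofFn σ).take ((k : ℕ) + 1)) = true)).min'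
      (h.imp fun k hk => Finset.mem_filter.mpr ⟨Finset.mem_univ _, hk⟩))
  else σ ⟨n - 1, Nat.sub_lt hn one_pos⟩

/-- With `δ = (M - m)/n` and `σ_i` the length-`n` sequence which
increases as `m + δ, m + 2δ, …, m + iδ` on the first `i` days and then drops to
`m`, the optimal profit of `σ_i` is `m + iδ`, and no single deterministic online
search strategy is optimal on two distinct instances `σ_i, σ_j` with `i < j`. -/
theorem no_strategy_optimal_on_two_instances
    (n : ℕ) (hn : 0 < n) (m M : ℝ) (hm : 0 < m) (hmM : m < M) :
    let δ : ℝ := (M - m) / n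
    let σ : ℕ → Fin n → ℝ := fun i k => if (k : ℕ) < i then m + ((k : ℕ) + 1) * δ else m
    (∀ i : ℕ, 1 ≤ i → i ≤ n → maxPrice hn (σ i) = m + (i : ℝ) * δ) ∧
    (∀ A : List ℝ → Bool, ∀ i j : ℕ, 1 ≤ i → i < j → j ≤ n →
      ¬(osProfit hn A (σ i) = m + (i : ℝ) * δ ∧ osProfit hn A (σ j) = m + (j : ℝ) * δ)) := by
  intro δ σ
  have hδ : 0 < δ := div_pos (sub_pos.mpr hmM) (by exact_mod_cast hn)
  have hval : ∀ i : ℕ, 1 ≤ i → ∀ k : Fin n, σ i k = m + (i : ℝ) * δ → (k : ℕ) + 1 = i := by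
    intro i h1 k hk
    simp only [σ] at hk
    split_ifs at hk with h
    · have h2 : (((k : ℕ) : ℝ) + 1) * δ = (i : ℝ) * δ := by linarith
      have h3 : ((k : ℕ) : ℝ) + 1 = (i : ℝ) := mul_right_cancel₀ (ne_of_gt hδ) h2
      exact_mod_cast h3
    · exfalso
      have h4 : (1 : ℝ) ≤ (i : ℝ) := by exact_mod_cast h1
      nlinarith
  constructor
  · intro i h1 hin
    have hi1n : i - 1 < n := by omega
    apply le_antisymm
    · apply Finset.sup'_le
      intro k _
      simp only [σ]
      split_ifs with h
      · have : ((k : ℕ) : ℝ) + 1 ≤ (i : ℝ) := by exact_mod_cast h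
        nlinarith
      · have h4 : (1 : ℝ) ≤ (i : ℝ) := by exact_mod_cast h1
        nlinarith
    · refine le_trans ?_ (Finset.le_sup' (σ i) (Finset.mem_univ (⟨i - 1, hi1n⟩ : Fin n)))
      simp only [σ]
      rw [if_pos (show ((⟨i - 1, hi1n⟩ : Fin n) : ℕ) < i by simp; omega)]
      have : (((⟨i - 1, hi1n⟩ : Fin n) : ℕ) : ℝ) + 1 = (i : ℝ) := by
        simp
        rw [Nat.cast_sub h1]
        push_cast; ring
      rw [this]
  · rintro A i j h1 hij hjn ⟨hi, hj⟩
    have hin : i < n := lt_of_lt_of_le hij hjn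
    have hi1n : i - 1 < n := by omega
    -- prefix equality
    have hpre : (List.ofFn (σ i)).take i = (List.ofFn (σ j)).take i := by
      apply List.ext_getElem
      · simp
      · intro p hp1 hp2
        simp only [List.length_take, List.length_ofFn, lt_min_iff] at hp1
        rw [List.getElem_take, List.getElem_take, List.getElem_ofFn, List.getElem_ofFn]
        simp only [σ]
        rw [if_pos (by simpa using hp1.1), if_pos (by omega)]
    rw [osProfit] at hi hj
    by_cases hexi : ∃ k : Fin n, A ((List.ofFn (σ i)).take ((k : ℕ) + 1)) = true
    · rw [dif_pos hexi] at hi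
      set S := (Finset.univ.filter (fun k : Fin n => A ((List.ofFn (σ i)).take ((k : ℕ) + 1)) = true)) with hS
      have hne : S.Nonempty := hexi.imp fun k hk => Finset.mem_filter.mpr ⟨Finset.mem_univ _, hk⟩
      have hk0mem := Finset.min'_mem S hne
      have hk0acc : A ((List.ofFn (σ i)).take (((S.min' hne : Fin n) : ℕ) + 1)) = true :=
        (Finset.mem_filter.mp hk0mem).2
      have hk0v : ((S.min' hne : Fin n) : ℕ) + 1 = i := hval i h1 _ hi
      rw [hk0v] at hk0acc
      have hacc : A ((List.ofFn (σ j)).take (((⟨i - 1, hi1n⟩ : Fin n) : ℕ) + 1)) = true := by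
        have : ((⟨i - 1, hi1n⟩ : Fin n) : ℕ) + 1 = i := by simp; omega
        rw [this, ← hpre]
        exact hk0acc
      have hexj : ∃ k : Fin n, A ((List.ofFn (σ j)).take ((k : ℕ) + 1)) = true :=
        ⟨_, hacc⟩
      rw [dif_pos hexj] at hj
      set T := (Finset.univ.filter (fun k : Fin n => A ((List.ofFn (σ j)).take ((k : ℕ) + 1)) = true)) with hT
      have hneT : T.Nonempty := hexj.imp fun k hk => Finset.mem_filter.mpr ⟨Finset.mem_univ _, hk⟩
      have hle : T.min' hneT ≤ ⟨i - 1, hi1n⟩ :=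
        Finset.min'_le T _ (Finset.mem_filter.mpr ⟨Finset.mem_univ _, hacc⟩)
      have hk1v : ((T.min' hneT : Fin n) : ℕ) + 1 = j := hval j (by omega) _ hj
      have : ((T.min' hneT : Fin n) : ℕ) ≤ i - 1 := hle
      omega
    · rw [dif_neg hexi] at hi
      have := hval i h1 _ hi
      simp at this
      omega
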